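/- Let n ≥ 1, let Ω ⊆ Ω' ⊆ ℝⁿ with Ω' open and bounded, and let ε, λ, μ > 0. For t > 0 set Ω^t = {x ∈ ℝⁿ : dist(x, Ω) < t}. Let f, g : ℝⁿ → ℝ be continuously differentiable, vanishing outside Ω', with ∫_{ℝⁿ} f² = ∫_{ℝⁿ} g² = 1, ∫_{ℝⁿ} fg = 0, ∫_{ℝⁿ} ‖∇f‖² ≤ λ, and ∫_{ℝⁿ} ‖∇g‖² ≤ λ. Let η : ℝⁿ → ℝ satisfy 0 ≤ η ≤ 1, η = 1 on Ω^ε, and η = 0 outside Ω^{2ε}. Let χ : ℝⁿ → ℝ be differentiable with 0 ≤ χ ≤ 1, ‖∇χ(x)‖ ≤ 1/ε for all x, χ = 0 on Ω, and χ = 1 outside Ω^ε. If μ ∫_{ℝⁿ} (χf)² ≤ ∫_{ℝⁿ} ‖∇(χf)‖² and μ ∫_{ℝⁿ} (χg)² ≤ ∫_{ℝⁿ} ‖∇(χg)‖², then |∫_{ℝⁿ} η² f g| ≤ 16 (1 + ε²λ)/(ε²μ). -/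

import Mathlib

open MeasureTheory

/-! By the product rule and the bounds on `χ`, `‖∇(χF)‖² ≤ 2 (F²/ε² + ‖∇F‖²)`, so the Rayleigh
quotient hypothesis bounds `∫ (χF)²` by `2 (1 + ε²λ) / (ε²μ)` for `F = f, g`. Since `∫ f g = 0`,
`∫ η² f g = ∫ (η² - 1) f g`; this integrand vanishes where `η = 1`, and elsewhere `χ = 1`, so it is
pointwise at most `((χf)² + (χg)²) / 2`. -/

section Gradient

variable {E : Type*} [NormedAddCommGroup E] [InnerProductSpace ℝ E] [CompleteSpace E]

theorem norm_gradient_eq_norm_fderiv (F : E → ℝ) (x : E) :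
    ‖gradient F x‖ = ‖fderiv ℝ F x‖ :=
  (InnerProductSpace.toDual ℝ E).symm.norm_map _

theorem norm_gradient_mul_le {χ F : E → ℝ} {x : E}
    (hχ : DifferentiableAt ℝ χ x) (hF : DifferentiableAt ℝ F x) :
    ‖gradient (fun y => χ y * F y) x‖ ≤ |F x| * ‖gradient χ x‖ + |χ x| * ‖gradient F x‖ := by
  simp only [norm_gradient_eq_norm_fderiv, fderiv_fun_mul hχ hF]
  refine (norm_add_le _ _).trans_eq ?_
  rw [norm_smul, norm_smul, Real.norm_eq_abs, Real.norm_eq_abs, add_comm]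

theorem sq_norm_gradient_mul_le {χ F : E → ℝ} {x : E} {C : ℝ}
    (hχ : DifferentiableAt ℝ χ x) (hF : DifferentiableAt ℝ F x)
    (hχ_abs : |χ x| ≤ 1) (hχ_grad : ‖gradient χ x‖ ≤ C) :
    ‖gradient (fun y => χ y * F y) x‖ ^ 2 ≤ 2 * (C ^ 2 * F x ^ 2 + ‖gradient F x‖ ^ 2) := by
  have hbound : ‖gradient (fun y => χ y * F y) x‖ ≤ |F x| * C + ‖gradient F x‖ :=
    (norm_gradient_mul_le hχ hF).trans <| add_le_add
      (mul_le_mul_of_nonneg_left hχ_grad (abs_nonneg _))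
      (mul_le_of_le_one_left (norm_nonneg _) hχ_abs)
  calc ‖gradient (fun y => χ y * F y) x‖ ^ 2
      ≤ (|F x| * C + ‖gradient F x‖) ^ 2 := pow_le_pow_left₀ (norm_nonneg _) hbound 2
    _ ≤ 2 * ((|F x| * C) ^ 2 + ‖gradient F x‖ ^ 2) := add_sq_le
    _ = 2 * (C ^ 2 * F x ^ 2 + ‖gradient F x‖ ^ 2) := by rw [mul_pow, sq_abs, mul_comm (F x ^ 2)]

theorem ContDiff.continuous_gradient {F : E → ℝ} (hF : ContDiff ℝ 1 F) :
    Continuous (gradient F) :=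
  (InnerProductSpace.toDual ℝ E).symm.continuous.comp (hF.continuous_fderiv one_ne_zero)

protected theorem HasCompactSupport.gradient {F : E → ℝ} (hF : HasCompactSupport F) :
    HasCompactSupport (gradient F) :=
  hF.fderiv ℝ |>.comp_left (map_zero _)

end Gradient

theorem HasCompactSupport.integrable_sq {X : Type*} [TopologicalSpace X] [MeasurableSpace X]
    [OpensMeasurableSpace X] {ν : Measure X} [IsFiniteMeasureOnCompacts ν] {F : X → ℝ}
    (hF_supp : HasCompactSupport F) (hF : Continuous F) : Integrable (fun x => F x ^ 2) ν := by
  have hF2_supp : HasCompactSupport (fun x => F x ^ 2) :=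
    hF_supp.comp_left (g := fun t : ℝ => t ^ 2) (by norm_num)
  exact (hF.pow 2).integrable_of_hasCompactSupport hF2_supp

section Integral

variable {E : Type*} [NormedAddCommGroup E] [InnerProductSpace ℝ E] [CompleteSpace E]
  [MeasurableSpace E] [OpensMeasurableSpace E] {ν : Measure E} [IsFiniteMeasureOnCompacts ν]

theorem integral_sq_norm_gradient_mul_le {χ F : E → ℝ} {C : ℝ} (hχ : Differentiable ℝ χ)
    (hχ_abs : ∀ x, |χ x| ≤ 1) (hχ_grad : ∀ x, ‖gradient χ x‖ ≤ C)
    (hF : ContDiff ℝ 1 F) (hF_supp : HasCompactSupport F) :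
    ∫ x, ‖gradient (fun y => χ y * F y) x‖ ^ 2 ∂ν ≤
      2 * (C ^ 2 * ∫ x, F x ^ 2 ∂ν + ∫ x, ‖gradient F x‖ ^ 2 ∂ν) := by
  have hF2 : Integrable (fun x => F x ^ 2) ν := hF_supp.integrable_sq hF.continuous
  have hDF2 : Integrable (fun x => ‖gradient F x‖ ^ 2) ν :=
    hF_supp.gradient.norm.integrable_sq hF.continuous_gradient.norm
  calc ∫ x, ‖gradient (fun y => χ y * F y) x‖ ^ 2 ∂ν
      ≤ ∫ x, 2 * (C ^ 2 * F x ^ 2 + ‖gradient F x‖ ^ 2) ∂ν :=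
        integral_mono_of_nonneg (.of_forall fun _ => sq_nonneg _)
          (((hF2.const_mul _).add hDF2).const_mul _)
          (.of_forall fun x => sq_norm_gradient_mul_le (hχ x)
            (hF.differentiable one_ne_zero x) (hχ_abs x) (hχ_grad x))
    _ = 2 * (C ^ 2 * ∫ x, F x ^ 2 ∂ν + ∫ x, ‖gradient F x‖ ^ 2 ∂ν) := by
        rw [integral_const_mul, integral_add (hF2.const_mul _) hDF2, integral_const_mul]

theorem integral_sq_mul_le_of_rayleigh {χ F : E → ℝ} {C lam μ : ℝ} (hμ : 0 < μ)
    (hχ : Differentiable ℝ χ) (hχ_abs : ∀ x, |χ x| ≤ 1) (hχ_grad : ∀ x, ‖gradient χ x‖ ≤ C)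
    (hF : ContDiff ℝ 1 F) (hF_supp : HasCompactSupport F)
    (hF_L2 : ∫ x, F x ^ 2 ∂ν = 1) (hF_energy : ∫ x, ‖gradient F x‖ ^ 2 ∂ν ≤ lam)
    (hrayleigh : μ * ∫ x, (χ x * F x) ^ 2 ∂ν ≤ ∫ x, ‖gradient (fun y => χ y * F y) x‖ ^ 2 ∂ν) :
    ∫ x, (χ x * F x) ^ 2 ∂ν ≤ 2 * (C ^ 2 + lam) / μ := by
  have henergy := integral_sq_norm_gradient_mul_le (ν := ν) hχ hχ_abs hχ_grad hF hF_supp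
  rw [hF_L2, mul_one] at henergy
  rw [le_div_iff₀ hμ, mul_comm]
  linarith

end Integral

theorem abs_sq_mul_mul_sub_mul_le {a c u v : ℝ} (ha₀ : 0 ≤ a) (ha₁ : a ≤ 1) (hac : a = 1 ∨ c = 1) :
    |a ^ 2 * u * v - u * v| ≤ ((c * u) ^ 2 + (c * v) ^ 2) / 2 := by
  rcases hac with rfl | rfl
  · simp only [one_pow, one_mul, sub_self, abs_zero]
    positivity
  · have ha : |a ^ 2 - 1| ≤ 1 := abs_le.2 ⟨by nlinarith, by nlinarith⟩
    calc |a ^ 2 * u * v - u * v| = |a ^ 2 - 1| * |u * v| := by rw [← abs_mul]; ring_nf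
      _ ≤ |u * v| := mul_le_of_le_one_left (abs_nonneg _) ha
      _ ≤ ((1 * u) ^ 2 + (1 * v) ^ 2) / 2 := by
        rw [one_mul, one_mul, abs_mul]
        nlinarith [sq_nonneg (|u| - |v|), sq_abs u, sq_abs v]

theorem abs_integral_sq_mul_mul_le {α : Type*} [MeasurableSpace α] {ν : Measure α}
    {η χ f g : α → ℝ} (hη₀ : ∀ x, 0 ≤ η x) (hη₁ : ∀ x, η x ≤ 1) (hcover : ∀ x, η x = 1 ∨ χ x = 1)
    (hfg_int : Integrable (fun x => f x * g x) ν) (hfg : ∫ x, f x * g x ∂ν = 0)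
    (hχf : Integrable (fun x => (χ x * f x) ^ 2) ν) (hχg : Integrable (fun x => (χ x * g x) ^ 2) ν) :
    |∫ x, η x ^ 2 * f x * g x ∂ν| ≤ (∫ x, (χ x * f x) ^ 2 ∂ν + ∫ x, (χ x * g x) ^ 2 ∂ν) / 2 := by
  -- `η` need not be measurable; if the integrand is not integrable, its integral is `0`.
  by_cases hint : Integrable (fun x => η x ^ 2 * f x * g x) ν
  swap
  · rw [integral_undef hint, abs_zero]
    positivity
  calc |∫ x, η x ^ 2 * f x * g x ∂ν|
      = |∫ x, (η x ^ 2 * f x * g x - f x * g x) ∂ν| := by rw [integral_sub hint hfg_int, hfg, sub_zero]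
    _ ≤ ∫ x, |η x ^ 2 * f x * g x - f x * g x| ∂ν := abs_integral_le_integral_abs
    _ ≤ ∫ x, ((χ x * f x) ^ 2 + (χ x * g x) ^ 2) / 2 ∂ν :=
        integral_mono_of_nonneg (.of_forall fun _ => abs_nonneg _) ((hχf.add hχg).div_const 2)
          (.of_forall fun x => abs_sq_mul_mul_sub_mul_le (hη₀ x) (hη₁ x) (hcover x))
    _ = (∫ x, (χ x * f x) ^ 2 ∂ν + ∫ x, (χ x * g x) ^ 2 ∂ν) / 2 := by
        rw [integral_div, integral_add hχf hχg]

theorem stmt4_general (n : ℕ)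
    (Ω Ω' : Set (EuclideanSpace ℝ (Fin n)))
    (hbdd : Bornology.IsBounded Ω')
    (ε lam μ : ℝ) (hε : 0 < ε) (hlam : 0 < lam) (hμ : 0 < μ)
    (f g η χ : EuclideanSpace ℝ (Fin n) → ℝ)
    (hf : ContDiff ℝ 1 f) (hf0 : ∀ x ∉ Ω', f x = 0)
    (hg : ContDiff ℝ 1 g) (hg0 : ∀ x ∉ Ω', g x = 0)
    (hfL2 : ∫ x, (f x) ^ 2 = 1)
    (hgL2 : ∫ x, (g x) ^ 2 = 1)
    (hfg : ∫ x, f x * g x = 0)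
    (hfD : ∫ x, ‖gradient f x‖ ^ 2 ≤ lam)
    (hgD : ∫ x, ‖gradient g x‖ ^ 2 ≤ lam)
    (hη0 : ∀ x, 0 ≤ η x) (hη1 : ∀ x, η x ≤ 1)
    (hηeq1 : ∀ x, Metric.infDist x Ω < ε → η x = 1)
    (hχd : Differentiable ℝ χ)
    (hχ0 : ∀ x, 0 ≤ χ x) (hχ1 : ∀ x, χ x ≤ 1)
    (hχg : ∀ x, ‖gradient χ x‖ ≤ 1 / ε)
    (hχ1out : ∀ x, ¬ Metric.infDist x Ω < ε → χ x = 1)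
    (hvarf : μ * ∫ x, (χ x * f x) ^ 2 ≤
      ∫ x, ‖gradient (fun y => χ y * f y) x‖ ^ 2)
    (hvarg : μ * ∫ x, (χ x * g x) ^ 2 ≤
      ∫ x, ‖gradient (fun y => χ y * g y) x‖ ^ 2) :
    |∫ x, (η x) ^ 2 * f x * g x| ≤ 16 * (1 + ε ^ 2 * lam) / (ε ^ 2 * μ) := by
  have hf_supp : HasCompactSupport f :=
    .intro hbdd.isCompact_closure fun x hx => hf0 x (hx <| subset_closure ·)
  have hg_supp : HasCompactSupport g :=
    .intro hbdd.isCompact_closure fun x hx => hg0 x (hx <| subset_closure ·)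
  have hχ_abs (x) : |χ x| ≤ 1 := abs_le.2 ⟨by linarith [hχ0 x], hχ1 x⟩
  have hcover (x) : η x = 1 ∨ χ x = 1 :=
    (lt_or_ge (Metric.infDist x Ω) ε).imp (hηeq1 x) fun h => hχ1out x h.not_gt
  have hχf_L2 := integral_sq_mul_le_of_rayleigh hμ hχd hχ_abs hχg hf hf_supp hfL2 hfD hvarf
  have hχg_L2 := integral_sq_mul_le_of_rayleigh hμ hχd hχ_abs hχg hg hg_supp hgL2 hgD hvarg
  have hcross := abs_integral_sq_mul_mul_le hη0 hη1 hcover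
    ((hf.continuous.mul hg.continuous).integrable_of_hasCompactSupport hf_supp.mul_right) hfg
    (hf_supp.mul_left.integrable_sq (hχd.continuous.mul hf.continuous))
    (hg_supp.mul_left.integrable_sq (hχd.continuous.mul hg.continuous))
  calc |∫ x, (η x) ^ 2 * f x * g x|
      ≤ 2 * ((1 / ε) ^ 2 + lam) / μ := by linarith
    _ = 2 * (1 + ε ^ 2 * lam) / (ε ^ 2 * μ) := by field_simp
    _ ≤ 16 * (1 + ε ^ 2 * lam) / (ε ^ 2 * μ) := by gcongr; norm_num

/-- Off-diagonal case of Lemma 2.3: `|∫ η² f g| ≤ 16(1+ε²λ)/(ε²μ)` for two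
orthonormal eigenfunction-like test functions f, g. -/
theorem stmt4 (n : ℕ) (hn : 1 ≤ n)
    (Ω Ω' : Set (EuclideanSpace ℝ (Fin n)))
    (hsub : Ω ⊆ Ω') (hopen : IsOpen Ω') (hbdd : Bornology.IsBounded Ω')
    (ε lam μ : ℝ) (hε : 0 < ε) (hlam : 0 < lam) (hμ : 0 < μ)
    (f g η χ : EuclideanSpace ℝ (Fin n) → ℝ)
    (hf : ContDiff ℝ 1 f) (hf0 : ∀ x ∉ Ω', f x = 0)
    (hg : ContDiff ℝ 1 g) (hg0 : ∀ x ∉ Ω', g x = 0)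
    (hfL2 : ∫ x, (f x) ^ 2 = 1)
    (hgL2 : ∫ x, (g x) ^ 2 = 1)
    (hfg : ∫ x, f x * g x = 0)
    (hfD : ∫ x, ‖gradient f x‖ ^ 2 ≤ lam)
    (hgD : ∫ x, ‖gradient g x‖ ^ 2 ≤ lam)
    (hη0 : ∀ x, 0 ≤ η x) (hη1 : ∀ x, η x ≤ 1)
    (hηeq1 : ∀ x, Metric.infDist x Ω < ε → η x = 1)
    (hηeq0 : ∀ x, ¬ Metric.infDist x Ω < 2 * ε → η x = 0)
    (hχd : Differentiable ℝ χ)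
    (hχ0 : ∀ x, 0 ≤ χ x) (hχ1 : ∀ x, χ x ≤ 1)
    (hχg : ∀ x, ‖gradient χ x‖ ≤ 1 / ε)
    (hχΩ : ∀ x ∈ Ω, χ x = 0)
    (hχ1out : ∀ x, ¬ Metric.infDist x Ω < ε → χ x = 1)
    (hvarf : μ * ∫ x, (χ x * f x) ^ 2 ≤
      ∫ x, ‖gradient (fun y => χ y * f y) x‖ ^ 2)
    (hvarg : μ * ∫ x, (χ x * g x) ^ 2 ≤
      ∫ x, ‖gradient (fun y => χ y * g y) x‖ ^ 2) :
    |∫ x, (η x) ^ 2 * f x * g x| ≤ 16 * (1 + ε ^ 2 * lam) / (ε ^ 2 * μ) :=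
  stmt4_general n Ω Ω' hbdd ε lam μ hε hlam hμ f g η χ hf hf0 hg hg0 hfL2 hgL2 hfg hfD hgD hη0 hη1
    hηeq1 hχd hχ0 hχ1 hχg hχ1out hvarf hvarg
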